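/- Covariance intersection preserves consistency: if (X̂₀, C₀) and (X̂₁, C₁) are consistent estimators of a random variable X (i.e., Cᵢ - cov[X - X̂ᵢ] is positive semidefinite for i = 0,1), and s ∈ [0,1] with (1-s)C₀⁻¹ + sC₁⁻¹ invertible, then the fused estimator (X̂ₐ, Cₐ) with Cₐ⁻¹ = (1-s)C₀⁻¹ + sC₁⁻¹ and X̂ₐ = Cₐ((1-s)C₀⁻¹X̂₀ + sC₁⁻¹X̂₁) is also consistent: Cₐ - cov[X - X̂ₐ] is positive semidefinite. -/

import Mathlib

/-!
Write `eᵢ = X - X̂ᵢ` and `Kᵢ = Cₐ Cᵢ⁻¹`; then the fused error is `X - X̂ₐ = (1-s) K₀ e₀ + s K₁ e₁`.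
A pair `(C, Y)` with `C - cov[Y] ⪰ 0` is the same as a symmetric `C` with
`Var[xᵀ Y] ≤ xᵀ C x` for every `x`. In this form consistency is visibly preserved by linear maps
(`(K C Kᵀ, K Y)`) and, because the variance is convex, by convex combinations. So the fused error
is consistent with `(1-s) K₀ C₀ K₀ᵀ + s K₁ C₁ K₁ᵀ = Cₐ ((1-s) C₀⁻¹ + s C₁⁻¹) Cₐ = Cₐ`.
-/

open MeasureTheory

/-- Covariance matrix of a random vector `Y : Ω → Fin n → ℝ`:
`cov[Y] = E[Y Yᵀ] - E[Y] E[Y]ᵀ`. -/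
noncomputable def covMatrix {Ω : Type*} [MeasurableSpace Ω] (μ : Measure Ω)
    {n : ℕ} (Y : Ω → Fin n → ℝ) : Matrix (Fin n) (Fin n) ℝ :=
  Matrix.of fun i j =>
    (∫ ω, Y ω i * Y ω j ∂μ) - (∫ ω, Y ω i ∂μ) * (∫ ω, Y ω j ∂μ)

open Matrix ProbabilityTheory

namespace Matrix

variable {n : Type*} [Fintype n] [DecidableEq n] {R : Type*} [CommRing R]

/-- No invertibility is needed: for singular `A`, `A⁻¹ = 0`. -/
theorem nonsing_inv_mul_mul_nonsing_inv (A : Matrix n n R) : A⁻¹ * A * A⁻¹ = A⁻¹ := by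
  by_cases hA : IsUnit A.det
  · rw [nonsing_inv_mul A hA, Matrix.one_mul]
  · simp [nonsing_inv_apply_not_isUnit A hA]

theorem mul_nonsing_inv_mul_mul_transpose {C : Matrix n n R} (hC : C.IsSymm) {m : Type*}
    (A : Matrix m n R) : A * C⁻¹ * C * (A * C⁻¹)ᵀ = A * C⁻¹ * Aᵀ := by
  rw [transpose_mul, hC.inv.eq, ← Matrix.mul_assoc, Matrix.mul_assoc A, Matrix.mul_assoc A,
    nonsing_inv_mul_mul_nonsing_inv]

theorem sub_nonsing_inv_mulVec_add_mulVec {A B : Matrix n n R} (h : IsUnit (A + B).det)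
    (x x₀ x₁ : n → R) :
    x - (A + B)⁻¹ *ᵥ (A *ᵥ x₀ + B *ᵥ x₁) = (A + B)⁻¹ *ᵥ (A *ᵥ (x - x₀) + B *ᵥ (x - x₁)) := by
  conv_lhs => rw [← one_mulVec x, ← nonsing_inv_mul _ h, ← mulVec_mulVec]
  rw [← mulVec_sub]
  congr 1
  rw [add_mulVec, mulVec_sub, mulVec_sub]
  abel

end Matrix

section

variable {Ω : Type*} [MeasurableSpace Ω] {μ : Measure Ω}

theorem ProbabilityTheory.convexOn_variance [IsFiniteMeasure μ] :
    ConvexOn ℝ {X : Ω → ℝ | MemLp X 2 μ} (fun X => Var[X; μ]) := by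
  refine ⟨fun X hX Y hY a b _ _ _ => (hX.const_smul a).add (hY.const_smul b), ?_⟩
  intro X hX Y hY a b ha hb hab
  have hgap : a * Var[X; μ] + b * Var[Y; μ] - Var[a • X + b • Y; μ] = a * b * Var[X - Y; μ] := by
    rw [variance_add (hX.const_smul a) (hY.const_smul b), variance_sub hX hY,
      variance_smul, variance_smul, covariance_smul_left, covariance_smul_right]
    obtain rfl : b = 1 - a := eq_sub_of_add_eq' hab
    ring
  simp only [smul_eq_mul]
  linarith [mul_nonneg (mul_nonneg ha hb) (variance_nonneg (X - Y) μ)]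

theorem MeasureTheory.MemLp.dotProduct {ι : Type*} [Fintype ι] {p : ENNReal} {Y : Ω → ι → ℝ}
    (hY : MemLp Y p μ) (x : ι → ℝ) : MemLp (fun ω => x ⬝ᵥ Y ω) p μ :=
  memLp_finsetSum _ fun i _ => (hY.eval i).const_mul (x i)

theorem MeasureTheory.MemLp.mulVec {ι κ : Type*} [Fintype ι] [Fintype κ] {p : ENNReal}
    {Y : Ω → ι → ℝ} (hY : MemLp Y p μ) (M : Matrix κ ι ℝ) : MemLp (fun ω => M *ᵥ Y ω) p μ :=
  MemLp.of_eval fun i => hY.dotProduct (M i)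

variable {n : ℕ} {Y Y₀ Y₁ : Ω → Fin n → ℝ}

theorem isHermitian_covMatrix (μ : Measure Ω) (Y : Ω → Fin n → ℝ) :
    (covMatrix μ Y).IsHermitian := by
  ext i j
  simp only [conjTranspose_apply, star_trivial, covMatrix, of_apply, mul_comm]

variable [IsProbabilityMeasure μ]

theorem covMatrix_eq_covariance (hY : MemLp Y 2 μ) (i j : Fin n) :
    covMatrix μ Y i j = cov[fun ω => Y ω i, fun ω => Y ω j; μ] := by
  rw [covariance_eq_sub (hY.eval i) (hY.eval j)]
  rfl

theorem dotProduct_covMatrix_mulVec (hY : MemLp Y 2 μ) (x : Fin n → ℝ) :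
    x ⬝ᵥ covMatrix μ Y *ᵥ x = Var[fun ω => x ⬝ᵥ Y ω; μ] := by
  simp only [dotProduct]
  rw [variance_fun_sum fun i => (hY.eval i).const_mul (x i)]
  simp only [covariance_const_mul_left, covariance_const_mul_right, mulVec, dotProduct,
    covMatrix_eq_covariance hY, Finset.mul_sum]
  exact Finset.sum_congr rfl fun i _ => Finset.sum_congr rfl fun j _ => by ring

theorem posSemidef_sub_covMatrix_iff (hY : MemLp Y 2 μ) {C : Matrix (Fin n) (Fin n) ℝ} :
    (C - covMatrix μ Y).PosSemidef ↔
      C.IsHermitian ∧ ∀ x, Var[fun ω => x ⬝ᵥ Y ω; μ] ≤ x ⬝ᵥ C *ᵥ x := by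
  have hcov := isHermitian_covMatrix μ Y
  rw [posSemidef_iff_dotProduct_mulVec]
  refine and_congr ⟨fun h => by simpa using h.add hcov, fun h => h.sub hcov⟩
    (forall_congr' fun x => ?_)
  rw [star_trivial, sub_mulVec, dotProduct_sub, dotProduct_covMatrix_mulVec hY, sub_nonneg]

theorem posSemidef_sub_covMatrix_mulVec (hY : MemLp Y 2 μ) {C : Matrix (Fin n) (Fin n) ℝ}
    (h : (C - covMatrix μ Y).PosSemidef) {m : ℕ} (K : Matrix (Fin m) (Fin n) ℝ) :
    (K * C * Kᵀ - covMatrix μ (fun ω => K *ᵥ Y ω)).PosSemidef := by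
  rw [posSemidef_sub_covMatrix_iff hY] at h
  rw [posSemidef_sub_covMatrix_iff (hY.mulVec K)]
  refine ⟨by simpa [conjTranspose_eq_transpose_of_trivial] using
    isHermitian_mul_mul_conjTranspose K h.1, fun x => ?_⟩
  have hx : (fun ω => x ⬝ᵥ K *ᵥ Y ω) = fun ω => Kᵀ *ᵥ x ⬝ᵥ Y ω := by
    funext ω
    rw [dotProduct_mulVec, mulVec_transpose]
  calc Var[fun ω => x ⬝ᵥ K *ᵥ Y ω; μ] = Var[fun ω => Kᵀ *ᵥ x ⬝ᵥ Y ω; μ] := by rw [hx]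
    _ ≤ Kᵀ *ᵥ x ⬝ᵥ C *ᵥ Kᵀ *ᵥ x := h.2 _
    _ = x ⬝ᵥ (K * C * Kᵀ) *ᵥ x := by
      rw [← mulVec_mulVec, ← mulVec_mulVec, dotProduct_mulVec x K, mulVec_transpose]

theorem posSemidef_sub_covMatrix_smul_add_smul (hY₀ : MemLp Y₀ 2 μ) (hY₁ : MemLp Y₁ 2 μ)
    {C₀ C₁ : Matrix (Fin n) (Fin n) ℝ} (h₀ : (C₀ - covMatrix μ Y₀).PosSemidef)
    (h₁ : (C₁ - covMatrix μ Y₁).PosSemidef) {a b : ℝ} (ha : 0 ≤ a) (hb : 0 ≤ b)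
    (hab : a + b = 1) :
    (a • C₀ + b • C₁ - covMatrix μ (fun ω => a • Y₀ ω + b • Y₁ ω)).PosSemidef := by
  rw [posSemidef_sub_covMatrix_iff hY₀] at h₀
  rw [posSemidef_sub_covMatrix_iff hY₁] at h₁
  rw [posSemidef_sub_covMatrix_iff (Y := fun ω => a • Y₀ ω + b • Y₁ ω)
    ((hY₀.const_smul a).add (hY₁.const_smul b))]
  refine ⟨(h₀.1.smul (IsSelfAdjoint.all a)).add (h₁.1.smul (IsSelfAdjoint.all b)), fun x => ?_⟩
  have hx : (fun ω => x ⬝ᵥ (a • Y₀ ω + b • Y₁ ω))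
      = a • (fun ω => x ⬝ᵥ Y₀ ω) + b • (fun ω => x ⬝ᵥ Y₁ ω) := by
    funext ω
    simp [dotProduct_add, dotProduct_smul]
  calc Var[fun ω => x ⬝ᵥ (a • Y₀ ω + b • Y₁ ω); μ]
      ≤ a * Var[fun ω => x ⬝ᵥ Y₀ ω; μ] + b * Var[fun ω => x ⬝ᵥ Y₁ ω; μ] := by
        rw [hx]
        exact convexOn_variance.2 (hY₀.dotProduct x) (hY₁.dotProduct x) ha hb hab
    _ ≤ a * (x ⬝ᵥ C₀ *ᵥ x) + b * (x ⬝ᵥ C₁ *ᵥ x) := by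
        gcongr
        exacts [h₀.2 x, h₁.2 x]
    _ = x ⬝ᵥ (a • C₀ + b • C₁) *ᵥ x := by
        simp only [add_mulVec, smul_mulVec, dotProduct_add, dotProduct_smul, smul_eq_mul]

end

theorem covariance_intersection_consistent_general
    {Ω : Type*} [MeasurableSpace Ω] (μ : Measure Ω) [IsProbabilityMeasure μ]
    {n : ℕ} (X X0 X1 : Ω → Fin n → ℝ)
    (C0 C1 : Matrix (Fin n) (Fin n) ℝ)
    (hL2_0 : ∀ i, MemLp (fun ω => X ω i - X0 ω i) 2 μ)
    (hL2_1 : ∀ i, MemLp (fun ω => X ω i - X1 ω i) 2 μ)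
    (hcons0 : (C0 - covMatrix μ (fun ω => X ω - X0 ω)).PosSemidef)
    (hcons1 : (C1 - covMatrix μ (fun ω => X ω - X1 ω)).PosSemidef)
    (s : ℝ) (hs : s ∈ Set.Icc (0 : ℝ) 1)
    (hinv : IsUnit ((1 - s) • C0⁻¹ + s • C1⁻¹).det)
    (Ca : Matrix (Fin n) (Fin n) ℝ)
    (hCa : Ca = ((1 - s) • C0⁻¹ + s • C1⁻¹)⁻¹)
    (Xa : Ω → Fin n → ℝ)
    (hXa : ∀ ω, Xa ω =
      Ca.mulVec ((1 - s) • C0⁻¹.mulVec (X0 ω) + s • C1⁻¹.mulVec (X1 ω))) :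
    (Ca - covMatrix μ (fun ω => X ω - Xa ω)).PosSemidef := by
  have hY0 : MemLp (fun ω => X ω - X0 ω) 2 μ := MemLp.of_eval hL2_0
  have hY1 : MemLp (fun ω => X ω - X1 ω) 2 μ := MemLp.of_eval hL2_1
  have hC0 : C0.IsSymm := isHermitian_iff_isSymm.1 ((posSemidef_sub_covMatrix_iff hY0).1 hcons0).1
  have hC1 : C1.IsSymm := isHermitian_iff_isSymm.1 ((posSemidef_sub_covMatrix_iff hY1).1 hcons1).1
  have hCa_symm : Ca.IsSymm := hCa ▸ ((hC0.inv.smul _).add (hC1.inv.smul _)).inv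
  have hCaS : Ca * ((1 - s) • C0⁻¹ + s • C1⁻¹) = 1 := hCa ▸ nonsing_inv_mul _ hinv
  have herr : (fun ω => X ω - Xa ω) = fun ω =>
      (1 - s) • (Ca * C0⁻¹) *ᵥ (X ω - X0 ω) + s • (Ca * C1⁻¹) *ᵥ (X ω - X1 ω) := by
    funext ω
    rw [hXa, hCa, ← smul_mulVec, ← smul_mulVec, sub_nonsing_inv_mulVec_add_mulVec hinv]
    simp only [mulVec_add, smul_mulVec, mulVec_smul, mulVec_mulVec]
  have hfused := posSemidef_sub_covMatrix_smul_add_smul (hY0.mulVec _) (hY1.mulVec _)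
    (posSemidef_sub_covMatrix_mulVec hY0 hcons0 (Ca * C0⁻¹))
    (posSemidef_sub_covMatrix_mulVec hY1 hcons1 (Ca * C1⁻¹))
    (sub_nonneg.2 hs.2) hs.1 (sub_add_cancel 1 s)
  rw [herr]
  convert hfused using 2
  rw [mul_nonsing_inv_mul_mul_transpose hC0, mul_nonsing_inv_mul_mul_transpose hC1, hCa_symm.eq]
  conv_lhs => rw [← Matrix.one_mul Ca, ← hCaS]
  simp only [Matrix.mul_add, Matrix.add_mul, Matrix.mul_smul, Matrix.smul_mul]

/-- Covariance intersection preserves consistency: if `(X̂₀, C₀)` and `(X̂₁, C₁)`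
are consistent estimators of `X` and `s ∈ [0,1]` with `(1-s)C₀⁻¹ + sC₁⁻¹`
invertible, then the CI-fused estimator `(X̂ₐ, Cₐ)` is consistent. -/
theorem covariance_intersection_consistent
    {Ω : Type*} [MeasurableSpace Ω] (μ : Measure Ω) [IsProbabilityMeasure μ]
    {n : ℕ} (X X0 X1 : Ω → Fin n → ℝ)
    (C0 C1 : Matrix (Fin n) (Fin n) ℝ)
    (hC0 : C0.PosDef) (hC1 : C1.PosDef)
    (hL2_0 : ∀ i, MemLp (fun ω => X ω i - X0 ω i) 2 μ)
    (hL2_1 : ∀ i, MemLp (fun ω => X ω i - X1 ω i) 2 μ)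
    (hcons0 : (C0 - covMatrix μ (fun ω => X ω - X0 ω)).PosSemidef)
    (hcons1 : (C1 - covMatrix μ (fun ω => X ω - X1 ω)).PosSemidef)
    (s : ℝ) (hs : s ∈ Set.Icc (0 : ℝ) 1)
    (hinv : IsUnit ((1 - s) • C0⁻¹ + s • C1⁻¹).det)
    (Ca : Matrix (Fin n) (Fin n) ℝ)
    (hCa : Ca = ((1 - s) • C0⁻¹ + s • C1⁻¹)⁻¹)
    (Xa : Ω → Fin n → ℝ)
    (hXa : ∀ ω, Xa ω =
      Ca.mulVec ((1 - s) • C0⁻¹.mulVec (X0 ω) + s • C1⁻¹.mulVec (X1 ω))) :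
    (Ca - covMatrix μ (fun ω => X ω - Xa ω)).PosSemidef :=
  covariance_intersection_consistent_general μ X X0 X1 C0 C1 hL2_0 hL2_1 hcons0 hcons1 s hs hinv Ca
    hCa Xa hXa
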